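/- arXiv:1409.2911 — 4 statements merged into one kernel-verified Lean document; each statement's English description precedes it below -/
import Mathlib

section
/- Let $(h^{p,q})_{0\le p,q\le n}$ be a doubly-indexed family of reals satisfying the Serre duality $h^{p,q} = h^{n-p,n-q}$ for all $p,q$. Define $h(x) := \sum_{p,q=0}^n (-1)^{p+q} h^{p,q}\, x(p,q)$ for any function $x$ of $(p,q)$. Then for every $i \ge 0$, $h(p^{2i+1}) = \frac{1}{2}\sum_{j=1}^{2i+1}\binom{2i+1}{j} n^j (-1)^{2i+1-j} h(p^{2i+1-j})$; in particular $h(p^{2i+1})$ is a linear combination of $h(p^0), h(p^1), \dots, h(p^{2i})$ with coefficients depending only on $n$ and $i$, whose leading term is $(i+\tfrac12) n\, h(p^{2i})$. -/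
open Finset

/-- Under Serre duality `h p q = h (n-p) (n-q)`, with
`H m = ∑_{p,q} (-1)^(p+q) h p q · p^m`, every odd moment satisfies
`H (2i+1) = (1/2) ∑_{j=1}^{2i+1} C(2i+1,j) n^j (-1)^(2i+1-j) H (2i+1-j)`. -/
theorem stmt_2 (n : ℕ) (h : ℕ → ℕ → ℝ)
    (hserre : ∀ p ≤ n, ∀ q ≤ n, h p q = h (n - p) (n - q))
    (H : ℕ → ℝ)
    (hH : ∀ m, H m = ∑ p ∈ Finset.range (n + 1), ∑ q ∈ Finset.range (n + 1),
      (-1 : ℝ) ^ (p + q) * h p q * (p : ℝ) ^ m) :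
    ∀ i : ℕ, H (2 * i + 1) =
      (1 / 2) * ∑ j ∈ Finset.Icc 1 (2 * i + 1),
        (Nat.choose (2 * i + 1) j : ℝ) * (n : ℝ) ^ j * (-1 : ℝ) ^ (2 * i + 1 - j) *
          H (2 * i + 1 - j) := by
  intro i
  set m := 2 * i + 1 with hm
  have hmodd : Odd m := ⟨i, by omega⟩
  have hnn : ∀ k : ℕ, ((-1:ℝ))^k * (-1)^k = 1 := by
    intro k; rw [← pow_add, ← two_mul, pow_mul]; norm_num
  have sign : ∀ p ≤ n, ((-1:ℝ))^(n - p) = (-1)^n * (-1)^p := by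
    intro p hp
    have h1 : ((-1:ℝ))^(n-p) * (-1)^p = (-1)^n := by
      rw [← pow_add, Nat.sub_add_cancel hp]
    calc ((-1:ℝ))^(n-p) = (-1)^(n-p) * ((-1)^p * (-1)^p) := by rw [hnn p, mul_one]
      _ = ((-1)^(n-p) * (-1)^p) * (-1)^p := by ring
      _ = (-1)^n * (-1)^p := by rw [h1]
  have key : H m = ∑ p ∈ range (n+1), ∑ q ∈ range (n+1),
      (-1:ℝ)^(p+q) * h p q * ((n:ℝ) - (p:ℝ))^m := by
    rw [hH m, ← Finset.sum_range_reflect]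
    refine Finset.sum_congr rfl ?_
    intro p hp
    rw [← Finset.sum_range_reflect]
    refine Finset.sum_congr rfl ?_
    intro q hq
    have hpn : p ≤ n := Nat.lt_succ_iff.mp (mem_range.mp hp)
    have hqn : q ≤ n := Nat.lt_succ_iff.mp (mem_range.mp hq)
    have e1 : n + 1 - 1 - p = n - p := by omega
    have e2 : n + 1 - 1 - q = n - q := by omega
    rw [e1, e2, ← hserre p hpn q hqn]
    have hsgn : ((-1:ℝ))^(n - p + (n - q)) = (-1)^(p+q) := by
      rw [pow_add, sign p hpn, sign q hqn]
      calc ((-1:ℝ))^n * (-1)^p * ((-1)^n * (-1)^q)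
          = ((-1)^n * (-1)^n) * ((-1)^p * (-1)^q) := by ring
        _ = (-1)^p * (-1)^q := by rw [hnn n, one_mul]
        _ = (-1)^(p+q) := (pow_add _ _ _).symm
    rw [hsgn, Nat.cast_sub hpn]
  have expand : ∀ p : ℕ, ((n:ℝ) - (p:ℝ))^m = ∑ j ∈ range (m+1),
      (m.choose j : ℝ) * (n:ℝ)^j * ((-1:ℝ)^(m-j) * (p:ℝ)^(m-j)) := by
    intro p
    have := add_pow (n:ℝ) (-(p:ℝ)) m
    rw [← sub_eq_add_neg] at this
    rw [this]
    refine Finset.sum_congr rfl fun j _ => ?_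
    rw [neg_pow]
    ring
  have key2 : H m = ∑ j ∈ range (m+1),
      (m.choose j : ℝ) * (n:ℝ)^j * (-1:ℝ)^(m-j) * H (m-j) := by
    rw [key]
    calc ∑ p ∈ range (n+1), ∑ q ∈ range (n+1), (-1:ℝ)^(p+q) * h p q * ((n:ℝ)-(p:ℝ))^m
        = ∑ p ∈ range (n+1), ∑ q ∈ range (n+1), ∑ j ∈ range (m+1),
            (m.choose j : ℝ) * (n:ℝ)^j * (-1:ℝ)^(m-j) *
              ((-1:ℝ)^(p+q) * h p q * (p:ℝ)^(m-j)) := by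
          refine sum_congr rfl fun p _ => sum_congr rfl fun q _ => ?_
          rw [expand p, Finset.mul_sum]
          exact sum_congr rfl fun j _ => by ring
      _ = ∑ p ∈ range (n+1), ∑ j ∈ range (m+1), ∑ q ∈ range (n+1),
            (m.choose j : ℝ) * (n:ℝ)^j * (-1:ℝ)^(m-j) *
              ((-1:ℝ)^(p+q) * h p q * (p:ℝ)^(m-j)) :=
          sum_congr rfl fun p _ => Finset.sum_comm
      _ = ∑ j ∈ range (m+1), ∑ p ∈ range (n+1), ∑ q ∈ range (n+1),
            (m.choose j : ℝ) * (n:ℝ)^j * (-1:ℝ)^(m-j) *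
              ((-1:ℝ)^(p+q) * h p q * (p:ℝ)^(m-j)) := Finset.sum_comm
      _ = ∑ j ∈ range (m+1), (m.choose j : ℝ) * (n:ℝ)^j * (-1:ℝ)^(m-j) * H (m-j) := by
          refine sum_congr rfl fun j _ => ?_
          rw [hH, Finset.mul_sum]
          refine sum_congr rfl fun p _ => ?_
          rw [Finset.mul_sum]
  have hsplit : (∑ j ∈ range (m+1), (m.choose j : ℝ) * (n:ℝ)^j * (-1:ℝ)^(m-j) * H (m-j))
      = (∑ j ∈ range m, (m.choose (j+1) : ℝ) * (n:ℝ)^(j+1) * (-1:ℝ)^(m-(j+1)) * H (m-(j+1)))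
        + (-1:ℝ)^m * H m := by
    rw [Finset.sum_range_succ']
    simp
  have hicc : (∑ j ∈ Finset.Icc 1 m, (m.choose j : ℝ) * (n:ℝ)^j * (-1:ℝ)^(m-j) * H (m-j))
      = ∑ j ∈ range m, (m.choose (j+1) : ℝ) * (n:ℝ)^(j+1) * (-1:ℝ)^(m-(j+1)) * H (m-(j+1)) := by
    rw [← Finset.Ico_add_one_right_eq_Icc, Finset.sum_Ico_eq_sum_range]
    simp [add_comm]
  have hneg : ((-1:ℝ))^m = -1 := hmodd.neg_one_pow
  rw [hicc]
  rw [hsplit, hneg] at key2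
  linarith
end

section
/- Let $n$ be even and let $(h^{p,q})_{0\le p,q\le n}$ be reals satisfying the mirror symmetry $h^{p,q} = h^{p,n-q}$ for all $p,q$. Define $h(x) := \sum_{p,q=0}^n (-1)^{p+q} h^{p,q} x(p,q)$. Then $h(pq) = \frac{n}{2} h(p)$ and $h(p^3 q) = \frac{n}{2} h(p^3)$. -/
open Finset

lemma stmt7_key (n : ℕ) (hn : Even n) (h : ℕ → ℕ → ℝ)
    (hmirror : ∀ p ≤ n, ∀ q ≤ n, h p q = h p (n - q)) (g : ℕ → ℝ) :
    ∑ p ∈ Finset.range (n + 1), ∑ q ∈ Finset.range (n + 1),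
        (-1 : ℝ) ^ (p + q) * h p q * (g p * (q : ℝ)) =
      ((n : ℝ) / 2) * ∑ p ∈ Finset.range (n + 1), ∑ q ∈ Finset.range (n + 1),
        (-1 : ℝ) ^ (p + q) * h p q * g p := by
  have refl : ∀ p ∈ Finset.range (n + 1),
      ∑ q ∈ Finset.range (n + 1), (-1 : ℝ) ^ (p + q) * h p q * (g p * (q : ℝ))
      = ∑ q ∈ Finset.range (n + 1),
          (-1 : ℝ) ^ (p + q) * h p q * (g p * ((n : ℝ) - (q : ℝ))) := by
    intro p hp
    rw [← Finset.sum_range_reflect]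
    refine Finset.sum_congr rfl fun q hq => ?_
    have hq' : q ≤ n := by
      simp only [Finset.mem_range] at hq; omega
    have h1 : n + 1 - 1 - q = n - q := by omega
    rw [h1]
    have hp' : p ≤ n := by
      simp only [Finset.mem_range] at hp; omega
    have hsign : (-1 : ℝ) ^ (p + (n - q)) = (-1 : ℝ) ^ (p + q) := by
      rcases Nat.even_or_odd q with he | ho
      · have : Even (n - q) := (Nat.even_sub hq').mpr (by simp [hn, he])
        rw [pow_add, pow_add, this.neg_one_pow, he.neg_one_pow]
      · have : Odd (n - q) := by
          rcases Nat.even_or_odd (n - q) with h2 | h2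
          · exact absurd ((Nat.even_sub hq').mp h2 |>.mp hn) (Nat.not_even_iff_odd.mpr ho)
          · exact h2
        rw [pow_add, pow_add, this.neg_one_pow, ho.neg_one_pow]
    have hh : h p (n - q) = h p q := (hmirror p hp' q hq').symm
    have hcast : ((n - q : ℕ) : ℝ) = (n : ℝ) - (q : ℝ) := by
      exact Nat.cast_sub hq'
    rw [hsign, hh, hcast]
  have h2 : (∑ p ∈ Finset.range (n + 1), ∑ q ∈ Finset.range (n + 1),
        (-1 : ℝ) ^ (p + q) * h p q * (g p * (q : ℝ)))
      + (∑ p ∈ Finset.range (n + 1), ∑ q ∈ Finset.range (n + 1),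
        (-1 : ℝ) ^ (p + q) * h p q * (g p * (q : ℝ)))
      = (n : ℝ) * ∑ p ∈ Finset.range (n + 1), ∑ q ∈ Finset.range (n + 1),
        (-1 : ℝ) ^ (p + q) * h p q * g p := by
    nth_rewrite 2 [Finset.sum_congr rfl refl]
    rw [Finset.mul_sum, ← Finset.sum_add_distrib]
    refine Finset.sum_congr rfl fun p _ => ?_
    rw [Finset.mul_sum, ← Finset.sum_add_distrib]
    refine Finset.sum_congr rfl fun q _ => ?_
    ring
  linarith [h2]

/-- If `n` is even and `h p q = h p (n-q)` (mirror symmetry), then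
`h(pq) = (n/2) h(p)` and `h(p³q) = (n/2) h(p³)`. -/
theorem stmt_7 (n : ℕ) (hn : Even n) (h : ℕ → ℕ → ℝ)
    (hmirror : ∀ p ≤ n, ∀ q ≤ n, h p q = h p (n - q)) :
    (∑ p ∈ Finset.range (n + 1), ∑ q ∈ Finset.range (n + 1),
        (-1 : ℝ) ^ (p + q) * h p q * ((p : ℝ) * (q : ℝ)) =
      ((n : ℝ) / 2) * ∑ p ∈ Finset.range (n + 1), ∑ q ∈ Finset.range (n + 1),
        (-1 : ℝ) ^ (p + q) * h p q * (p : ℝ)) ∧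
    (∑ p ∈ Finset.range (n + 1), ∑ q ∈ Finset.range (n + 1),
        (-1 : ℝ) ^ (p + q) * h p q * ((p : ℝ) ^ 3 * (q : ℝ)) =
      ((n : ℝ) / 2) * ∑ p ∈ Finset.range (n + 1), ∑ q ∈ Finset.range (n + 1),
        (-1 : ℝ) ^ (p + q) * h p q * (p : ℝ) ^ 3) := by
  exact ⟨stmt7_key n hn h hmirror (fun p => (p : ℝ)),
         stmt7_key n hn h hmirror (fun p => (p : ℝ) ^ 3)⟩
end

section
/- Let $n$ be even, and let $h^{p,q}$ ($0\le p,q\le n$) be reals satisfying $h^{p,q}=h^{q,p}$ and $h^{p,q}=h^{p,n-q}$, with Betti numbers $b_i := \sum_{p+q=i}h^{p,q}$. Suppose a real number $C$ satisfies $h(p^2) = \frac{n(3n+1)}{12}\sum_i(-1)^i b_i + \frac{1}{6}C$, where $h(x) = \sum_{p,q}(-1)^{p+q}h^{p,q}x(p,q)$. Then $C = \sum_{i=0}^{2n}(-1)^i b_i\left[3i^2 - n\left(3n+\tfrac12\right)\right]$. -/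
open Finset

private lemma refl_sum_aux (n : ℕ) (g : ℕ → ℝ)
    (hg : ∀ q ∈ Finset.range (n + 1), g (n - q) = g q) :
    2 * ∑ q ∈ Finset.range (n + 1), g q * q =
      (n : ℝ) * ∑ q ∈ Finset.range (n + 1), g q := by
  have h1 : ∑ q ∈ Finset.range (n + 1), g q * q
      = ∑ q ∈ Finset.range (n + 1), g q * ((n : ℝ) - q) := by
    rw [← Finset.sum_range_reflect (fun q => g q * (q : ℝ)) (n + 1)]
    refine Finset.sum_congr rfl fun q hq => ?_
    have hqn : q ≤ n := by simpa [Nat.lt_succ_iff] using hq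
    have he : n + 1 - 1 - q = n - q := by omega
    simp only [he, hg q hq, Nat.cast_sub hqn]
  calc 2 * ∑ q ∈ range (n + 1), g q * q
      = ∑ q ∈ range (n + 1), g q * q + ∑ q ∈ range (n + 1), g q * ((n : ℝ) - q) := by
        rw [← h1]; ring
    _ = ∑ q ∈ range (n + 1), g q * (n : ℝ) := by
        rw [← Finset.sum_add_distrib]; exact Finset.sum_congr rfl fun q _ => by ring
    _ = (n : ℝ) * ∑ q ∈ range (n + 1), g q := by rw [← Finset.sum_mul]; ring

private lemma weight_sum (n : ℕ) (h : ℕ → ℕ → ℝ) (b : ℕ → ℝ)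
    (hb : ∀ i, b i = ∑ p ∈ Finset.range (n + 1), ∑ q ∈ Finset.range (n + 1),
      if p + q = i then h p q else 0) (w : ℕ → ℝ) :
    ∑ i ∈ Finset.range (2 * n + 1), w i * b i =
      ∑ p ∈ Finset.range (n + 1), ∑ q ∈ Finset.range (n + 1), w (p + q) * h p q := by
  simp only [hb, Finset.mul_sum, mul_ite, mul_zero]
  rw [Finset.sum_comm]
  refine Finset.sum_congr rfl fun p hp => ?_
  rw [Finset.sum_comm]
  refine Finset.sum_congr rfl fun q hq => ?_
  have hmem : p + q ∈ Finset.range (2 * n + 1) := by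
    simp only [Finset.mem_range, Nat.lt_succ_iff] at *
    omega
  rw [Finset.sum_ite_eq (Finset.range (2 * n + 1)) (p + q) (fun i => w i * h p q),
    if_pos hmem]

/-- abstract Salamon theorem: `n` even, `h p q = h q p`,
`h p q = h p (n-q)`, `b i = ∑_{p+q=i} h p q`; if a real `C` satisfies
`h(p²) = n(3n+1)/12 ∑(-1)^i b_i + C/6`, then
`C = ∑ (-1)^i b_i [3i² - n(3n + 1/2)]`. -/
theorem stmt_15 (n : ℕ) (hn : Even n) (h : ℕ → ℕ → ℝ)
    (hsym : ∀ p ≤ n, ∀ q ≤ n, h p q = h q p)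
    (hmirror : ∀ p ≤ n, ∀ q ≤ n, h p q = h p (n - q))
    (b : ℕ → ℝ)
    (hb : ∀ i, b i = ∑ p ∈ Finset.range (n + 1), ∑ q ∈ Finset.range (n + 1),
      if p + q = i then h p q else 0)
    (C : ℝ)
    (hC : ∑ p ∈ Finset.range (n + 1), ∑ q ∈ Finset.range (n + 1),
        (-1 : ℝ) ^ (p + q) * h p q * (p : ℝ) ^ 2 =
      ((n : ℝ) * (3 * (n : ℝ) + 1) / 12) *
        (∑ i ∈ Finset.range (2 * n + 1), (-1 : ℝ) ^ i * b i) + C / 6) :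
    C = ∑ i ∈ Finset.range (2 * n + 1),
      (-1 : ℝ) ^ i * b i * (3 * (i : ℝ) ^ 2 - (n : ℝ) * (3 * (n : ℝ) + 1 / 2)) := by
  set A : ℕ → ℕ → ℝ := fun p q => (-1 : ℝ) ^ (p + q) * h p q with hA
  -- Sign facts
  have hsgn : ∀ q ≤ n, ((-1 : ℝ) ^ (n - q)) = (-1 : ℝ) ^ q := by
    intro q hq
    rcases Nat.even_or_odd q with he | ho
    · have : Even (n - q) := (Nat.even_sub hq).2 (by simp [hn, he])
      rw [this.neg_one_pow, he.neg_one_pow]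
    · have : ¬ Even (n - q) := by
        rw [Nat.even_sub hq]; simp [hn, Nat.not_even_iff_odd.2 ho]
      rw [(Nat.not_even_iff_odd.1 this).neg_one_pow, ho.neg_one_pow]
  have hAsym : ∀ p ≤ n, ∀ q ≤ n, A p q = A q p := by
    intro p hp q hq
    simp only [hA, hsym p hp q hq, Nat.add_comm p q]
  have hAmir : ∀ p ≤ n, ∀ q ≤ n, A p (n - q) = A p q := by
    intro p hp q hq
    simp only [hA, pow_add, ← hmirror p hp q hq, hsgn q hq]
  have hAmir' : ∀ q ≤ n, ∀ p ≤ n, A (n - p) q = A p q := by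
    intro q hq p hp
    rw [hAsym (n - p) (Nat.sub_le n p) q hq, hAmir q hq p hp, hAsym q hq p hp]
  -- abbreviations
  set H1 : ℝ := ∑ p ∈ range (n + 1), ∑ q ∈ range (n + 1), A p q with hH1
  set Hp : ℝ := ∑ p ∈ range (n + 1), ∑ q ∈ range (n + 1), A p q * p with hHp
  set Hpq : ℝ := ∑ p ∈ range (n + 1), ∑ q ∈ range (n + 1), A p q * p * q with hHpq
  set Hpp : ℝ := ∑ p ∈ range (n + 1), ∑ q ∈ range (n + 1), A p q * (p : ℝ) ^ 2 with hHpp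
  set S0 : ℝ := ∑ i ∈ range (2 * n + 1), (-1 : ℝ) ^ i * b i with hS0
  set S2 : ℝ := ∑ i ∈ range (2 * n + 1), (-1 : ℝ) ^ i * b i * (i : ℝ) ^ 2 with hS2
  -- S0 = H1
  have e0 : S0 = H1 := by
    rw [hS0, hH1, weight_sum n h b hb (fun i => (-1 : ℝ) ^ i)]
  -- S2 = 2 Hpp + 2 Hpq
  have e2 : S2 = 2 * Hpp + 2 * Hpq := by
    have : S2 = ∑ p ∈ range (n + 1), ∑ q ∈ range (n + 1),
        (A p q * (p : ℝ) ^ 2 + A p q * (q : ℝ) ^ 2 + 2 * (A p q * p * q)) := by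
      have := weight_sum n h b hb (fun i => (-1 : ℝ) ^ i * (i : ℝ) ^ 2)
      rw [hS2]
      rw [show (∑ i ∈ range (2 * n + 1), (-1 : ℝ) ^ i * b i * (i : ℝ) ^ 2)
          = ∑ i ∈ range (2 * n + 1), ((-1 : ℝ) ^ i * (i : ℝ) ^ 2) * b i from
        Finset.sum_congr rfl fun i _ => by ring, this]
      refine Finset.sum_congr rfl fun p _ => Finset.sum_congr rfl fun q _ => ?_
      simp only [hA]
      push_cast
      ring
    rw [this]
    have hqq : (∑ p ∈ range (n + 1), ∑ q ∈ range (n + 1), A p q * (q : ℝ) ^ 2) = Hpp := by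
      rw [Finset.sum_comm, hHpp]
      refine Finset.sum_congr rfl fun p hp => Finset.sum_congr rfl fun q hq => ?_
      rw [hAsym q (by simpa [Nat.lt_succ_iff] using hq) p (by simpa [Nat.lt_succ_iff] using hp)]
    simp only [Finset.sum_add_distrib, ← Finset.mul_sum]
    rw [hqq, ← hHpp, ← hHpq]
    ring
  -- 2 Hpq = n Hp
  have e3 : 2 * Hpq = (n : ℝ) * Hp := by
    rw [hHpq, hHp, Finset.mul_sum, Finset.mul_sum]
    refine Finset.sum_congr rfl fun p hp => ?_
    have hp' : p ≤ n := by simpa [Nat.lt_succ_iff] using hp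
    have := refl_sum_aux n (fun q => A p q * p)
      (fun q hq => by show A p (n - q) * (p:ℝ) = A p q * p; rw [hAmir p hp' q (by simpa [Nat.lt_succ_iff] using hq)])
    calc 2 * ∑ q ∈ range (n + 1), A p q * p * q
        = (n : ℝ) * ∑ q ∈ range (n + 1), A p q * p := this
      _ = ∑ q ∈ range (n + 1), (n : ℝ) * (A p q * p) := by rw [Finset.mul_sum]
      _ = (n : ℝ) * ∑ q ∈ range (n + 1), A p q * p := by rw [← Finset.mul_sum]
  -- 2 Hp = n H1
  have e4 : 2 * Hp = (n : ℝ) * H1 := by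
    rw [hHp, hH1, Finset.sum_comm (s := range (n + 1)) (t := range (n + 1)),
      Finset.sum_comm (s := range (n + 1)) (t := range (n + 1)) (f := fun p q => A p q),
      Finset.mul_sum, Finset.mul_sum]
    refine Finset.sum_congr rfl fun q hq => ?_
    have hq' : q ≤ n := by simpa [Nat.lt_succ_iff] using hq
    exact refl_sum_aux n (fun p => A p q)
      (fun p hp => by show A (n - p) q = A p q; exact hAmir' q hq' p (by simpa [Nat.lt_succ_iff] using hp))
  -- hC in terms of Hpp, S0
  have e5 : Hpp = ((n : ℝ) * (3 * (n : ℝ) + 1) / 12) * S0 + C / 6 := hC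
  -- goal RHS
  have e6 : (∑ i ∈ Finset.range (2 * n + 1),
      (-1 : ℝ) ^ i * b i * (3 * (i : ℝ) ^ 2 - (n : ℝ) * (3 * (n : ℝ) + 1 / 2)))
      = 3 * S2 - ((n : ℝ) * (3 * (n : ℝ) + 1 / 2)) * S0 := by
    rw [hS2, hS0, Finset.mul_sum, Finset.mul_sum, ← Finset.sum_sub_distrib]
    exact Finset.sum_congr rfl fun i _ => by ring
  rw [e6]
  linear_combination (-3 : ℝ) * e2 + (-3 : ℝ) * e3 - (3 / 2 : ℝ) * (n : ℝ) * e4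
    - 6 * e5 + (3 / 2 : ℝ) * (n : ℝ) ^ 2 * e0
end

section
/- Let $n$ be even and $h^{p,q}$ ($0\le p,q\le n$) reals with $h^{p,q}=h^{q,p}$ and $h^{p,q}=h^{p,n-q}$, and $b_i := \sum_{p+q=i}h^{p,q}$. With $h(x) := \sum_{p,q}(-1)^{p+q}h^{p,q}x(p,q)$, one has $h(p^3 q) = \frac{n}{2} h(p^3)$, and hence if additionally $h(p^3) = \frac{n^2(n+1)}{8}\sum_i(-1)^ib_i$, then $h(p^3 q) = \frac{n^3(n+1)}{16}\sum_{i}(-1)^i b_i$. -/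
open Finset

/-- `n` even, `h p q = h q p`, `h p q = h p (n-q)`,
`b i = ∑_{p+q=i} h p q`. Then `h(p³q) = (n/2) h(p³)`, and if moreover
`h(p³) = n²(n+1)/8 ∑(-1)^i b_i`, then `h(p³q) = n³(n+1)/16 ∑(-1)^i b_i`. -/
theorem stmt_16 (n : ℕ) (hn : Even n) (h : ℕ → ℕ → ℝ)
    (hsym : ∀ p ≤ n, ∀ q ≤ n, h p q = h q p)
    (hmirror : ∀ p ≤ n, ∀ q ≤ n, h p q = h p (n - q))
    (b : ℕ → ℝ)
    (hb : ∀ i, b i = ∑ p ∈ Finset.range (n + 1), ∑ q ∈ Finset.range (n + 1),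
      if p + q = i then h p q else 0) :
    (∑ p ∈ Finset.range (n + 1), ∑ q ∈ Finset.range (n + 1),
        (-1 : ℝ) ^ (p + q) * h p q * ((p : ℝ) ^ 3 * (q : ℝ)) =
      ((n : ℝ) / 2) * ∑ p ∈ Finset.range (n + 1), ∑ q ∈ Finset.range (n + 1),
        (-1 : ℝ) ^ (p + q) * h p q * (p : ℝ) ^ 3) ∧
    ((∑ p ∈ Finset.range (n + 1), ∑ q ∈ Finset.range (n + 1),
        (-1 : ℝ) ^ (p + q) * h p q * (p : ℝ) ^ 3 =
      ((n : ℝ) ^ 2 * ((n : ℝ) + 1) / 8) *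
        ∑ i ∈ Finset.range (2 * n + 1), (-1 : ℝ) ^ i * b i) →
      ∑ p ∈ Finset.range (n + 1), ∑ q ∈ Finset.range (n + 1),
        (-1 : ℝ) ^ (p + q) * h p q * ((p : ℝ) ^ 3 * (q : ℝ)) =
      ((n : ℝ) ^ 3 * ((n : ℝ) + 1) / 16) *
        ∑ i ∈ Finset.range (2 * n + 1), (-1 : ℝ) ^ i * b i) := by
  have key : ∀ p ∈ Finset.range (n + 1),
      2 * (∑ q ∈ Finset.range (n + 1), (-1 : ℝ) ^ (p + q) * h p q * ((p : ℝ) ^ 3 * (q : ℝ))) =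
        (n : ℝ) * ∑ q ∈ Finset.range (n + 1), (-1 : ℝ) ^ (p + q) * h p q * (p : ℝ) ^ 3 := by
    intro p hp
    rw [Finset.mem_range] at hp
    have hpn : p ≤ n := by omega
    have hrefl : (∑ q ∈ Finset.range (n + 1), (-1 : ℝ) ^ (p + q) * h p q * ((p : ℝ) ^ 3 * (q : ℝ)))
        = ∑ q ∈ Finset.range (n + 1),
            (-1 : ℝ) ^ (p + q) * h p q * ((p : ℝ) ^ 3 * ((n : ℝ) - (q : ℝ))) := by
      rw [← Finset.sum_range_reflect]
      apply Finset.sum_congr rfl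
      intro q hq
      rw [Finset.mem_range] at hq
      have hq' : q ≤ n := by omega
      have h1 : h p (n + 1 - 1 - q) = h p q := by
        have : n + 1 - 1 - q = n - q := by omega
        rw [this]
        exact (hmirror p hpn q hq').symm
      have h2 : ((n + 1 - 1 - q : ℕ) : ℝ) = (n : ℝ) - (q : ℝ) := by
        have : n + 1 - 1 - q = n - q := by omega
        rw [this, Nat.cast_sub hq']
      have hmul : (-1 : ℝ) ^ (p + (n + 1 - 1 - q)) * (-1 : ℝ) ^ (p + q) = 1 := by
        rw [← pow_add]
        apply Even.neg_one_pow
        obtain ⟨k, hk⟩ := hn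
        exact ⟨p + k, by omega⟩
      have hsq : (-1 : ℝ) ^ (p + q) * (-1 : ℝ) ^ (p + q) = 1 := by
        rw [← pow_add]
        exact Even.neg_one_pow ⟨p + q, by ring⟩
      have h3 : (-1 : ℝ) ^ (p + (n + 1 - 1 - q)) = (-1 : ℝ) ^ (p + q) := by
        calc (-1 : ℝ) ^ (p + (n + 1 - 1 - q))
            = (-1 : ℝ) ^ (p + (n + 1 - 1 - q)) * ((-1 : ℝ) ^ (p + q) * (-1 : ℝ) ^ (p + q)) := by
              rw [hsq, mul_one]
          _ = ((-1 : ℝ) ^ (p + (n + 1 - 1 - q)) * (-1 : ℝ) ^ (p + q)) * (-1 : ℝ) ^ (p + q) := by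
              ring
          _ = (-1 : ℝ) ^ (p + q) := by rw [hmul, one_mul]
      rw [h1, h2, h3]
    calc 2 * (∑ q ∈ Finset.range (n + 1), (-1 : ℝ) ^ (p + q) * h p q * ((p : ℝ) ^ 3 * (q : ℝ)))
        = (∑ q ∈ Finset.range (n + 1), (-1 : ℝ) ^ (p + q) * h p q * ((p : ℝ) ^ 3 * (q : ℝ)))
          + ∑ q ∈ Finset.range (n + 1),
              (-1 : ℝ) ^ (p + q) * h p q * ((p : ℝ) ^ 3 * ((n : ℝ) - (q : ℝ))) := by
          rw [← hrefl]; ring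
      _ = ∑ q ∈ Finset.range (n + 1),
            ((-1 : ℝ) ^ (p + q) * h p q * ((p : ℝ) ^ 3 * (q : ℝ))
              + (-1 : ℝ) ^ (p + q) * h p q * ((p : ℝ) ^ 3 * ((n : ℝ) - (q : ℝ)))) := by
          rw [Finset.sum_add_distrib]
      _ = (n : ℝ) * ∑ q ∈ Finset.range (n + 1), (-1 : ℝ) ^ (p + q) * h p q * (p : ℝ) ^ 3 := by
          rw [Finset.mul_sum]
          apply Finset.sum_congr rfl
          intro q _
          ring
  have eq1 : (∑ p ∈ Finset.range (n + 1), ∑ q ∈ Finset.range (n + 1),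
        (-1 : ℝ) ^ (p + q) * h p q * ((p : ℝ) ^ 3 * (q : ℝ))) =
      ((n : ℝ) / 2) * ∑ p ∈ Finset.range (n + 1), ∑ q ∈ Finset.range (n + 1),
        (-1 : ℝ) ^ (p + q) * h p q * (p : ℝ) ^ 3 := by
    rw [Finset.mul_sum]
    apply Finset.sum_congr rfl
    intro p hp
    have := key p hp
    linarith
  refine ⟨eq1, fun hyp => ?_⟩
  rw [eq1, hyp]
  ring
end
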